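/- arXiv:2310.12607 — 7 statements merged into one kernel-verified Lean document; each statement's English description precedes it below -/
import Mathlib

section
/- For all nonnegative integers i and k and all real x, G_{i,k}(x)·(x)_k = G_{k,i}(x)·(x)_i, i.e. (Σ_{j=0}^{i} c(i,j,k)·x^j)·x(x-1)⋯(x-k+1) = (Σ_{j=0}^{k} c(k,j,i)·x^j)·x(x-1)⋯(x-i+1). -/
open Finset

noncomputable def s (i r : ℕ) : ℝ := (descPochhammer ℝ i).coeff r

noncomputable def c (i j : ℕ) (k : ℝ) : ℝ :=
  ∑ r ∈ Finset.Icc j i, (r.choose j : ℝ) * (-k) ^ (r - j) * s i r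

lemma desc_eval_prod (i : ℕ) (y : ℝ) :
    (descPochhammer ℝ i).eval y = ∏ t ∈ Finset.range i, (y - t) := by
  induction i with
  | zero => simp
  | succ n ih => rw [descPochhammer_succ_eval, ih, Finset.prod_range_succ]

lemma G_eq (i : ℕ) (k x : ℝ) :
    (∑ j ∈ Finset.range (i + 1), c i j k * x ^ j) = (descPochhammer ℝ i).eval (x - k) := by
  have hdeg : (descPochhammer ℝ i).natDegree < i + 1 := by
    rw [descPochhammer_natDegree]; omega
  rw [Polynomial.eval_eq_sum_range' hdeg]
  -- RHS = ∑ r ∈ range (i+1), s i r * (x - k)^r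
  have hrhs : ∑ r ∈ Finset.range (i+1), (descPochhammer ℝ i).coeff r * (x - k) ^ r
      = ∑ r ∈ Finset.range (i+1), ∑ j ∈ Finset.range (i+1),
          (r.choose j : ℝ) * (-k) ^ (r - j) * s i r * x ^ j := by
    refine Finset.sum_congr rfl fun r hr => ?_
    have hri : r ≤ i := by simpa using Nat.lt_succ_iff.mp (Finset.mem_range.mp hr)
    have : (x - k) ^ r = ∑ j ∈ Finset.range (r+1), x ^ j * (-k) ^ (r - j) * (r.choose j : ℝ) := by
      rw [sub_eq_add_neg, add_pow]
    rw [this, Finset.mul_sum]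
    rw [Finset.sum_subset (Finset.range_subset_range.mpr (by omega : r + 1 ≤ i + 1))]
    · refine Finset.sum_congr rfl fun j _ => ?_
      simp [s]; ring
    · intro j _ hj
      have : r.choose j = 0 := Nat.choose_eq_zero_of_lt (by simp at hj ⊢; omega)
      simp [this]
  rw [hrhs, Finset.sum_comm]
  refine Finset.sum_congr rfl fun j hj => ?_
  rw [c, Finset.sum_mul]
  refine Finset.sum_subset ?_ ?_
  · intro r hr; simp at hr ⊢; omega
  · intro r hr hnr
    simp only [Finset.mem_Icc, not_and, not_le] at hnr
    have hri : r ≤ i := by simp at hr; omega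
    have hrj : r < j := by
      rcases Nat.lt_or_ge r j with h | h
      · exact h
      · exact absurd (hnr h) (by omega)
    have : r.choose j = 0 := Nat.choose_eq_zero_of_lt hrj
    simp [this]

/-- `G_{i,k}(x) * (x)_k = G_{k,i}(x) * (x)_i` for nonnegative integers `i` and `k`. -/
theorem msn1_gf_symm (i k : ℕ) (x : ℝ) :
    (∑ j ∈ Finset.range (i + 1), c i j (k : ℝ) * x ^ j) * ∏ t ∈ Finset.range k, (x - t) =
      (∑ j ∈ Finset.range (k + 1), c k j (i : ℝ) * x ^ j) * ∏ t ∈ Finset.range i, (x - t) := by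
  rw [G_eq, G_eq, desc_eval_prod, desc_eval_prod]
  have key : ∀ a b : ℕ, (∏ t ∈ Finset.range a, (x - b - t)) * ∏ t ∈ Finset.range b, (x - t)
      = ∏ t ∈ Finset.range (b + a), (x - t) := by
    intro a b
    rw [Finset.prod_range_add, mul_comm]
    congr 1
    refine Finset.prod_congr rfl fun t _ => ?_
    push_cast
    ring
  rw [key, key, Nat.add_comm]
end

section
/- For every nonnegative integer j, every real k and every real x with |x| < 1, the series Σ_{i=0}^{∞} c(i,j,k)·x^i/i! converges with sum (1+x)^{-k} · (ln(1+x))^j / j! (here (1+x)^{-k} is the real power of the positive real number 1+x). -/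
open Finset

/-!
Writing `c(i,j,k) = (taylor (-k) (descPochhammer ℝ i)).coeff j`, i.e. the coefficient of `y^j` in
the falling factorial `(y-k)(y-k-1)⋯(y-k-i+1)`, one gets `∂c(i,j,k)/∂k = -(j+1) c(i,j+1,k)`.
For `j = 0` the series is the binomial series of `(1+x)^(-k)`. Differentiating the identity for
`j` term by term in `k` and using `∂/∂k (1+x)^(-k) L^j/j! = -(j+1) (1+x)^(-k) L^(j+1)/(j+1)!`,
with `L = log(1+x)`, gives the identity for `j+1`. The termwise differentiation is justified by
the bound `|c(i,j,k)| ≤ (N+1)(N+2)⋯(N+i)` for `|k| ≤ N`, which follows from the recursion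
`c(i+1,j+1,k) = c(i,j,k) - (k+i) c(i,j+1,k)`.
-/

open Polynomial
open scoped Nat

theorem c_eq_coeff_taylor (i j : ℕ) (k : ℝ) :
    c i j k = (taylor (-k) (descPochhammer ℝ i)).coeff j := by
  have hdeg : (descPochhammer ℝ i).natDegree < i + 1 := by
    rw [descPochhammer_natDegree]; omega
  have hsub : Icc j i ⊆ range (i + 1) := fun r hr => mem_range.2 (by grind)
  rw [(descPochhammer ℝ i).as_sum_range' (i + 1) hdeg, map_sum, finsetSum_coeff, c]
  simp only [taylor_monomial, coeff_C_mul, coeff_X_add_C_pow, s]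
  rw [← sum_subset hsub fun r _ hr => ?_]
  · exact sum_congr rfl fun r _ => by ring
  · rw [Nat.choose_eq_zero_of_lt (by grind), Nat.cast_zero, mul_zero, mul_zero]

theorem c_zero_right (i : ℕ) (k : ℝ) : c i 0 k = i ! * Ring.choose (-k) i := by
  rw [c_eq_coeff_taylor, taylor_coeff_zero, ← descPochhammer_map (algebraMap ℤ ℝ),
    eval_map_algebraMap, aeval_eq_smeval, Ring.descPochhammer_eq_factorial_smul_choose,
    nsmul_eq_mul]

theorem hasSum_c_zero_right {x : ℝ} (hx : |x| < 1) (k : ℝ) :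
    HasSum (fun i => c i 0 k * x ^ i / i !) ((1 + x) ^ (-k)) := by
  have h := (Real.one_add_rpow_hasFPowerSeriesOnBall_zero (a := -k)).hasSum
    (y := x) (by rw [← ENNReal.ofReal_one, Metric.eball_ofReal]; simpa using hx)
  have hterm :
      (fun i => binomialSeries ℝ (-k) i fun _ => x) = fun i => c i 0 k * x ^ i / i ! := by
    funext i
    rw [binomialSeries_apply, c_zero_right]
    simp only [List.ofFn_const, List.prod_replicate, smul_eq_mul]
    field_simp
  rwa [hterm, zero_add] at h

theorem hasDerivAt_c (i j : ℕ) (k : ℝ) :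
    HasDerivAt (fun k => c i j k) (-((j + 1) * c i (j + 1) k)) k := by
  set p := descPochhammer ℝ i
  have hderiv : derivative (hasseDeriv j p) = ((j + 1 : ℕ) : ℝ[X]) * hasseDeriv (j + 1) p := by
    rw [← hasseDeriv_one', ← LinearMap.comp_apply, hasseDeriv_comp, add_comm 1 j,
      Nat.choose_one_right, LinearMap.smul_apply, nsmul_eq_mul]
  simp only [c_eq_coeff_taylor, taylor_coeff]
  refine (((hasseDeriv j p).hasDerivAt (-k)).comp k (hasDerivAt_neg k)).congr_deriv ?_
  rw [hderiv, eval_mul, eval_natCast]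
  push_cast
  ring

theorem taylor_descPochhammer_succ {R : Type*} [CommRing R] (i : ℕ) (k : R) :
    taylor (-k) (descPochhammer R (i + 1)) =
      taylor (-k) (descPochhammer R i) * (X - C (k + i)) := by
  rw [descPochhammer_succ_right, taylor_mul, map_sub, taylor_X, ← C_eq_natCast, taylor_C,
    C_add, C_neg]
  ring

theorem c_succ_succ (i j : ℕ) (k : ℝ) :
    c (i + 1) (j + 1) k = c i j k - c i (j + 1) k * (k + i) := by
  simp only [c_eq_coeff_taylor, taylor_descPochhammer_succ, coeff_mul_X_sub_C]

theorem c_succ_zero (i : ℕ) (k : ℝ) : c (i + 1) 0 k = -(c i 0 k * (k + i)) := by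
  simp only [c_eq_coeff_taylor, taylor_descPochhammer_succ, mul_coeff_zero, coeff_sub, coeff_X_zero,
    coeff_C_zero]
  ring

theorem abs_c_le {N : ℕ} {k : ℝ} (hk : |k| ≤ N) (i j : ℕ) :
    |c i j k| ≤ (N + 1).ascFactorial i := by
  induction i generalizing j with
  | zero =>
    rw [c_eq_coeff_taylor, descPochhammer_zero, taylor_one, coeff_C]
    split_ifs <;> simp
  | succ i ih =>
    have hki : |k + i| ≤ N + i := (abs_add_le _ _).trans (by simpa using hk)
    rw [Nat.ascFactorial_succ]
    push_cast
    cases j with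
    | zero =>
      rw [c_succ_zero, abs_neg, abs_mul]
      nlinarith [ih 0, abs_nonneg (c i 0 k), abs_nonneg (k + i)]
    | succ j =>
      rw [c_succ_succ]
      calc |c i j k - c i (j + 1) k * (k + i)| ≤ |c i j k| + |c i (j + 1) k| * |k + i| := by
            rw [← abs_mul]; exact abs_sub _ _
        _ ≤ _ := by nlinarith [ih j, ih (j + 1), abs_nonneg (c i (j + 1) k), abs_nonneg (k + i)]

theorem summable_ascFactorial_mul_pow_div_factorial (N : ℕ) {r : ℝ} (hr : |r| < 1) :
    Summable fun i => ((N + 1).ascFactorial i : ℝ) * r ^ i / i ! := by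
  refine (summable_choose_mul_geometric_of_norm_lt_one N (r := r) hr).congr fun i => ?_
  rw [Nat.ascFactorial_eq_factorial_mul_choose, add_comm i N, Nat.choose_symm_add]
  push_cast
  field_simp

theorem summable_c_mul_pow_div_factorial {x : ℝ} (hx : |x| < 1) (j : ℕ) (k : ℝ) :
    Summable fun i => c i j k * x ^ i / i ! := by
  refine (summable_ascFactorial_mul_pow_div_factorial ⌈|k|⌉₊ (r := |x|) (by rwa [abs_abs]))
    |>.of_norm_bounded fun i => ?_
  rw [Real.norm_eq_abs, abs_div, abs_mul, abs_pow, Nat.abs_cast]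
  gcongr
  exact abs_c_le (Nat.le_ceil _) i j

theorem hasDerivAt_tsum_c {x : ℝ} (hx : |x| < 1) (j : ℕ) (k : ℝ) :
    HasDerivAt (fun z => ∑' i, c i j z * x ^ i / i !)
      (-(j + 1) * ∑' i, c i (j + 1) k * x ^ i / i !) k := by
  set N := ⌈|k|⌉₊ + 1
  have hk : k ∈ Metric.ball (0 : ℝ) N := by
    rw [mem_ball_zero_iff, Real.norm_eq_abs]
    exact (Nat.le_ceil _).trans_lt (by simp [N])
  have hu : Summable fun i => (j + 1) * (((N + 1).ascFactorial i : ℝ) * |x| ^ i / i !) :=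
    (summable_ascFactorial_mul_pow_div_factorial N (by rwa [abs_abs])).mul_left _
  have hterm : ∀ i z, HasDerivAt (fun z => c i j z * x ^ i / i !)
      (-(j + 1) * (c i (j + 1) z * x ^ i / i !)) z := fun i z =>
    (((hasDerivAt_c i j z).mul_const _).div_const _).congr_deriv (by ring)
  have hbound : ∀ i, ∀ z ∈ Metric.ball (0 : ℝ) N,
      ‖-(j + 1) * (c i (j + 1) z * x ^ i / i !)‖ ≤
        (j + 1) * (((N + 1).ascFactorial i : ℝ) * |x| ^ i / i !) := fun i z hz => by
    rw [mem_ball_zero_iff, Real.norm_eq_abs] at hz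
    rw [Real.norm_eq_abs, abs_mul, abs_div, abs_mul, abs_pow, Nat.abs_cast, abs_neg,
      abs_of_pos (by positivity : (0 : ℝ) < j + 1)]
    gcongr
    exact abs_c_le hz.le i (j + 1)
  rw [← tsum_mul_left]
  exact hasDerivAt_tsum_of_isPreconnected hu Metric.isOpen_ball
    (convex_ball 0 N).isPreconnected (fun i z _ => hterm i z) hbound hk
    (summable_c_mul_pow_div_factorial hx j k) hk

theorem hasSum_c_succ_right {x : ℝ} (hx : |x| < 1) (j : ℕ)
    (ih : ∀ k, HasSum (fun i => c i j k * x ^ i / i !)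
      ((1 + x) ^ (-k) * Real.log (1 + x) ^ j / j !)) (k : ℝ) :
    HasSum (fun i => c i (j + 1) k * x ^ i / i !)
      ((1 + x) ^ (-k) * Real.log (1 + x) ^ (j + 1) / (j + 1)!) := by
  have h1x : 0 < 1 + x := by linarith [neg_abs_le x]
  set T := (1 + x) ^ (-k) * Real.log (1 + x) ^ (j + 1) / (j + 1)!
  have hclosed : HasDerivAt (fun z => (1 + x) ^ (-z) * Real.log (1 + x) ^ j / j !)
      (-(j + 1) * T) k :=
    ((((hasDerivAt_neg k).const_rpow h1x).mul_const _).div_const _).congr_deriv (by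
      simp only [T, Nat.factorial_succ]; push_cast; field_simp; ring)
  have hseries := hasDerivAt_tsum_c hx j k
  simp only [fun z => (ih z).tsum_eq] at hseries
  have htsum : ∑' i, c i (j + 1) k * x ^ i / i ! = T :=
    mul_left_cancel₀ (neg_ne_zero.mpr (by positivity)) (hseries.unique hclosed)
  exact htsum ▸ (summable_c_mul_pow_div_factorial hx (j + 1) k).hasSum

/-- Exponential generating function of the MSN1 numbers: for `|x| < 1`,
`sum_{i=0}^{∞} c(i,j,k)*x^i/i! = (1+x)^(-k) * (ln(1+x))^j / j!`,
where `(1+x)^(-k)` is the real power. -/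
theorem msn1_egf (j : ℕ) (k x : ℝ) (hx : |x| < 1) :
    HasSum (fun i : ℕ => c i j k * x ^ i / (Nat.factorial i : ℝ))
      ((1 + x) ^ (-k) * (Real.log (1 + x)) ^ j / (Nat.factorial j : ℝ)) := by
  induction j generalizing k with
  | zero => simpa using hasSum_c_zero_right hx k
  | succ j ih => exact hasSum_c_succ_right hx j ih k
end

section
/- For every nonnegative integer i and every integer k ≥ 1, c(i,1,k) = (-1)^{i+1} · binom(k+i-1, i) · i! · (H_{k+i-1} - H_{k-1}), where H_n = Σ_{r=1}^{n} 1/r denotes the n-th harmonic number (H_0 = 0). -/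
open Finset

/-- Harmonic numbers `H_n = sum_{r=1}^{n} 1/r` (with `H_0 = 0`). -/
noncomputable def H (n : ℕ) : ℝ := ∑ r ∈ Finset.Icc 1 n, (1 : ℝ) / r

/-!
`c(i,j,x)` is the `j`-th Hasse derivative of the falling factorial `P_i(X) = ∏_{m<i} (X - m)`
evaluated at `-x`; for `j = 1` this is `P_i'(-x)`. The logarithmic derivative of `P_i` is
`∑_{m<i} 1/(X - m)`, so `P_i'(-k) = -P_i(-k) · ∑_{m<i} 1/(k + m)`, where
`P_i(-k) = (-1)^i · i! · binom(k+i-1, i)` and the sum is `H_{k+i-1} - H_{k-1}`.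
-/

open Polynomial

theorem c_eq_eval_hasseDeriv (i j : ℕ) (x : ℝ) :
    c i j x = ((descPochhammer ℝ i).hasseDeriv j).eval (-x) := by
  have hdeg : ((descPochhammer ℝ i).hasseDeriv j).natDegree < i + 1 - j + 1 := by
    have := natDegree_hasseDeriv_le (descPochhammer ℝ i) j
    rw [descPochhammer_natDegree] at this
    omega
  rw [c, eval_eq_sum_range' hdeg, ← Ico_add_one_right_eq_Icc, sum_Ico_eq_sum_range,
    sum_range_succ, hasseDeriv_coeff, coeff_eq_zero_of_natDegree_lt (p := descPochhammer ℝ i)]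
  · simp only [mul_zero, zero_mul, add_zero]
    refine sum_congr rfl fun n _ => ?_
    rw [hasseDeriv_coeff, s, add_comm j n, Nat.add_sub_cancel]
    ring
  · rw [descPochhammer_natDegree]
    omega

theorem derivative_descPochhammer_succ {R : Type*} [Ring R] (n : ℕ) :
    derivative (descPochhammer R (n + 1)) =
      derivative (descPochhammer R n) * (X - (n : R[X])) + descPochhammer R n := by
  rw [descPochhammer_succ_right, derivative_mul, derivative_sub, derivative_X,
    derivative_natCast, sub_zero, mul_one]

theorem eval_derivative_descPochhammer {K : Type*} [Field K] (n : ℕ) {x : K}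
    (hx : ∀ m < n, x - m ≠ 0) :
    (derivative (descPochhammer K n)).eval x =
      (descPochhammer K n).eval x * ∑ m ∈ range n, (x - m)⁻¹ := by
  induction n with
  | zero => simp
  | succ n ih =>
    rw [derivative_descPochhammer_succ, eval_add, eval_mul, ih fun m hm => hx m (by omega),
      descPochhammer_succ_eval, sum_range_succ, eval_sub, eval_X, eval_natCast]
    field_simp [hx n n.lt_succ_self]

theorem descPochhammer_eval_neg_natCast {R : Type*} [CommRing R] (k i : ℕ) :
    (descPochhammer R i).eval (-(k : R)) =
      (-1) ^ i * ((k + i - 1).choose i : R) * (i.factorial : R) := by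
  have h := ascPochhammer_eval_neg_eq_descPochhammer R (-(k : R)) i
  rw [neg_neg, ascPochhammer_nat_eq_natCast_descFactorial,
    Nat.descFactorial_eq_factorial_mul_choose] at h
  calc (descPochhammer R i).eval (-(k : R))
      = (-1) ^ i * ((-1) ^ i * (descPochhammer R i).eval (-(k : R))) := by
        rw [← mul_assoc, ← mul_pow, neg_one_mul, neg_neg, one_pow, one_mul]
    _ = (-1) ^ i * ((k + i - 1).choose i : R) * (i.factorial : R) := by
        rw [← h]
        push_cast
        ring

theorem H_eq_sum_range (n : ℕ) : H n = ∑ r ∈ range n, 1 / ((r : ℝ) + 1) := by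
  rw [H, ← Ico_add_one_right_eq_Icc, sum_Ico_eq_sum_range]
  refine sum_congr (by simp) fun r _ => ?_
  push_cast
  ring_nf

theorem H_sub_H_eq_sum_range (k i : ℕ) (hk : 1 ≤ k) :
    H (k + i - 1) - H (k - 1) = ∑ m ∈ range i, 1 / ((k : ℝ) + m) := by
  obtain ⟨k, rfl⟩ := Nat.exists_eq_add_of_le' hk
  rw [show k + 1 + i - 1 = k + i by omega, Nat.add_sub_cancel, H_eq_sum_range, H_eq_sum_range,
    sum_range_add, add_sub_cancel_left]
  refine sum_congr rfl fun m _ => ?_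
  push_cast
  ring_nf

/-- For integer `k ≥ 1`,
`c(i,1,k) = (-1)^(i+1) * binom(k+i-1,i) * i! * (H_{k+i-1} - H_{k-1})`. -/
theorem msn1_one_eq_harmonic (i k : ℕ) (hk : 1 ≤ k) :
    c i 1 (k : ℝ) =
      (-1 : ℝ) ^ (i + 1) * ((k + i - 1).choose i : ℝ) * (Nat.factorial i : ℝ) *
        (H (k + i - 1) - H (k - 1)) := by
  have hx : ∀ m < i, -(k : ℝ) - m ≠ 0 := fun m _ => by
    have : (0 : ℝ) < k + m := by positivity
    linarith
  have hsum : ∑ m ∈ range i, (-(k : ℝ) - m)⁻¹ = -(H (k + i - 1) - H (k - 1)) := by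
    rw [H_sub_H_eq_sum_range k i hk, ← sum_neg_distrib]
    refine sum_congr rfl fun m _ => ?_
    rw [← neg_add', inv_neg, one_div]
  rw [c_eq_eval_hasseDeriv, hasseDeriv_one, eval_derivative_descPochhammer i hx, hsum,
    descPochhammer_eval_neg_natCast]
  ring
end

section
/- For all nonnegative integers i and all integers j ≥ 1, c(i,j-1,1) = s(i+1,j), i.e. the MSN1 numbers with third parameter 1 are shifted signed Stirling numbers of the first kind. -/
open Finset Polynomial

/-- `c(i,j-1,1) = s(i+1,j)` for `j ≥ 1`: the MSN1 numbers with third parameter `1`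
are shifted signed Stirling numbers of the first kind. -/
theorem msn1_param_one_eq_stirling1 (i j : ℕ) (hj : 1 ≤ j) :
    c i (j - 1) 1 = s (i + 1) j := by
  obtain ⟨m, rfl⟩ : ∃ m, j = m + 1 := ⟨j - 1, (Nat.succ_pred_eq_of_pos hj).symm⟩
  have hm : m + 1 - 1 = m := rfl
  have hcomp : (descPochhammer ℝ i).comp (X - 1)
      = ∑ r ∈ Finset.range (i + 1), Polynomial.C (s i r) * (X - 1) ^ r := by
    conv_lhs => rw [(descPochhammer ℝ i).as_sum_range' (i + 1)
      (by rw [descPochhammer_natDegree ℝ]; omega)]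
    rw [Polynomial.comp, Polynomial.eval₂_finset_sum]
    simp [s, Polynomial.eval₂_mul, Polynomial.eval₂_pow]
  have hs : s (i + 1) (m + 1)
      = ∑ r ∈ Finset.range (i + 1), s i r * ((-1 : ℝ) ^ (r - m) * (r.choose m : ℝ)) := by
    rw [s, descPochhammer_succ_left, Polynomial.coeff_X_mul, hcomp,
      Polynomial.finset_sum_coeff]
    refine Finset.sum_congr rfl fun r _ => ?_
    rw [Polynomial.coeff_C_mul]
    congr 1
    have : (X - 1 : ℝ[X]) = X + Polynomial.C (-1) := by
      simp [sub_eq_add_neg]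
    rw [this, Polynomial.coeff_X_add_C_pow]
  rw [hs, c, hm]
  rw [← Finset.sum_subset (by intro x hx; simp only [Finset.mem_Icc] at hx; simp only [Finset.mem_range]; omega : Finset.Icc m i ⊆ Finset.range (i + 1))]
  · exact Finset.sum_congr rfl fun r _ => by ring
  · intro r hr hr'
    simp only [Finset.mem_range, Finset.mem_Icc, not_and, not_le] at hr hr'
    have : r < m := by omega
    simp [Nat.choose_eq_zero_of_lt this]
end

section
/- For all nonnegative integers i, j, n and every real k, the MSN1 numbers satisfy the convolution recursion c(i+n, j, k) = Σ_{r=0}^{j} c(n, r, k) · c(i, j-r, k+n). -/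
open Finset

open Polynomial in
lemma c_eq_coeff (i j : ℕ) (k : ℝ) :
    c i j k = ((descPochhammer ℝ i).comp (X - C k)).coeff j := by
  rw [c, Polynomial.comp, Polynomial.eval₂_eq_sum_range, Polynomial.finset_sum_coeff]
  rw [descPochhammer_natDegree]
  rw [← Finset.sum_subset (s₁ := Finset.Icc j i) (s₂ := Finset.range (i + 1))]
  · apply Finset.sum_congr rfl
    intro e _
    rw [show X - C k = X + C (-k) by rw [map_neg, sub_eq_add_neg], coeff_C_mul, coeff_X_add_C_pow, s]
    ring
  · intro x hx
    simp only [Finset.mem_Icc, Finset.mem_range] at *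
    omega
  · intro x hx hx'
    simp only [Finset.mem_Icc, Finset.mem_range] at *
    have hxj : x < j := by omega
    rw [show X - C k = X + C (-k) by rw [map_neg, sub_eq_add_neg], coeff_C_mul, coeff_X_add_C_pow,
      Nat.choose_eq_zero_of_lt hxj]
    simp

open Polynomial in
/-- Convolution recursion: `c(i+n,j,k) = sum_{r=0}^{j} c(n,r,k) * c(i,j-r,k+n)`. -/
theorem msn1_convolution_recursion (i j n : ℕ) (k : ℝ) :
    c (i + n) j k = ∑ r ∈ Finset.range (j + 1), c n r k * c i (j - r) (k + n) := by
  rw [c_eq_coeff, add_comm i n, ← descPochhammer_mul, mul_comp, comp_assoc, coeff_mul,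
    Finset.Nat.sum_antidiagonal_eq_sum_range_succ_mk]
  apply Finset.sum_congr rfl
  intro r _
  rw [c_eq_coeff, c_eq_coeff]
  congr 2
  simp only [sub_comp, X_comp, C_comp, ← Polynomial.C_eq_natCast]
  rw [C_add, sub_sub]
end

section
/- For all nonnegative integers i, j and every real k, the MSN1 numbers satisfy the recursion c(i+1, j, k) = c(i, j-1, k+1) - k·c(i, j, k+1), where c(i,-1,k+1) is interpreted as 0 when j = 0. -/
open Finset

/-- The MSN1 numbers extended by `0` to negative integer indices. -/
noncomputable def cZ (i j : ℤ) (k : ℝ) : ℝ :=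
  if 0 ≤ i ∧ 0 ≤ j then c i.toNat j.toNat k else 0

open Polynomial in
lemma key (i : ℕ) (k : ℝ) :
    (descPochhammer ℝ (i + 1)).comp (X - C k)
      = (X - C k) * ((descPochhammer ℝ i).comp (X - C (k + 1))) := by
  rw [descPochhammer_succ_left, mul_comp, X_comp, comp_assoc]
  congr 2
  simp [sub_comp]
  ring

/-- Recursion: `c(i+1,j,k) = c(i,j-1,k+1) - k*c(i,j,k+1)`,
where `c(i,-1,k+1)` is interpreted as `0` when `j = 0`. -/
theorem msn1_recursion_shift (i j : ℕ) (k : ℝ) :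
    cZ (i + 1) j k = cZ i ((j : ℤ) - 1) (k + 1) - k * cZ i j (k + 1) := by
  open Polynomial in
  cases j with
  | zero =>
    simp only [cZ]
    rw [if_pos ⟨by omega, by omega⟩, if_neg (by omega), if_pos ⟨by omega, by omega⟩]
    rw [show (((i : ℤ) + 1)).toNat = i + 1 by omega,
      show ((0 : ℕ) : ℤ).toNat = 0 by omega, show ((i : ℤ)).toNat = i by omega]
    rw [c_eq_coeff, c_eq_coeff, key]
    rw [Polynomial.coeff_zero_eq_eval_zero, Polynomial.coeff_zero_eq_eval_zero]
    simp
  | succ m =>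
    simp only [cZ]
    rw [if_pos ⟨by omega, by omega⟩, if_pos ⟨by omega, by omega⟩,
      if_pos ⟨by omega, by omega⟩]
    rw [show (((i : ℤ) + 1)).toNat = i + 1 by omega,
      show (((m + 1 : ℕ) : ℤ) - 1).toNat = m by omega,
      show (((m + 1 : ℕ) : ℤ)).toNat = m + 1 by omega,
      show ((i : ℤ)).toNat = i by omega]
    rw [c_eq_coeff, c_eq_coeff, c_eq_coeff, key, sub_mul, Polynomial.coeff_sub,
      Polynomial.coeff_X_mul, Polynomial.coeff_C_mul]
end

section
/- For all nonnegative integers i, j and every real k, the MSN1 and MSN2 numbers are orthogonal: Σ_{r=j}^{i} c(i,r,k)·b(r,j,k) = j!·δ_{i,j}, where δ_{i,j} = 1 if i = j and 0 otherwise. -/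
open Finset

/-- Moment generating Stirling numbers of the second kind (MSN2):
`b(i,j,k) = sum_{r=0}^{j} binom(j,r)*(-1)^(j-r)*(r+k)^i`. -/
noncomputable def b (i j : ℕ) (k : ℝ) : ℝ :=
  ∑ r ∈ Finset.range (j + 1), (j.choose r : ℝ) * (-1 : ℝ) ^ (j - r) * ((r : ℝ) + k) ^ i

/-- Auxiliary normalized version of `b`. -/
noncomputable def b' (j : ℕ) (k : ℝ) (r : ℕ) : ℝ :=
  ∑ t ∈ Finset.range (j + 1), (j.choose t : ℝ) * (-1 : ℝ) ^ t * ((t : ℝ) + k) ^ r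

lemma neg_one_pow_sub {t j : ℕ} (h : t ≤ j) : ((-1 : ℝ)) ^ (j - t) = (-1) ^ j * (-1) ^ t := by
  have h1 : ((-1 : ℝ)) ^ (j - t) * (-1) ^ t = (-1) ^ j := by
    rw [← pow_add, Nat.sub_add_cancel h]
  have ht : ((-1 : ℝ)) ^ t * (-1) ^ t = 1 := by
    rw [← mul_pow]; norm_num
  calc ((-1 : ℝ)) ^ (j - t) = (-1) ^ (j - t) * ((-1) ^ t * (-1) ^ t) := by rw [ht, mul_one]
    _ = ((-1 : ℝ)) ^ (j - t) * (-1) ^ t * (-1) ^ t := by ring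
    _ = (-1) ^ j * (-1) ^ t := by rw [h1]

lemma b_eq_b' (r j : ℕ) (k : ℝ) : b r j k = (-1) ^ j * b' j k r := by
  unfold b b'
  rw [Finset.mul_sum]
  refine Finset.sum_congr rfl fun t ht => ?_
  rw [Finset.mem_range] at ht
  rw [neg_one_pow_sub (Nat.lt_succ_iff.mp ht)]
  ring

lemma b'_rec (j : ℕ) (k : ℝ) (r : ℕ) : b' (j + 1) k r = b' j k r - b' j (k + 1) r := by
  unfold b'
  rw [Finset.sum_range_succ'
      (fun t => (((j + 1).choose t : ℕ) : ℝ) * (-1 : ℝ) ^ t * ((t : ℝ) + k) ^ r) (j + 1),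
    Finset.sum_range_succ'
      (fun t => ((j.choose t : ℕ) : ℝ) * (-1 : ℝ) ^ t * ((t : ℝ) + k) ^ r) j]
  have key : ∀ t ∈ Finset.range (j + 1),
      (((j + 1).choose (t + 1) : ℕ) : ℝ) * (-1 : ℝ) ^ (t + 1) * (((t + 1 : ℕ) : ℝ) + k) ^ r
        = ((j.choose (t + 1) : ℕ) : ℝ) * (-1 : ℝ) ^ (t + 1) * (((t + 1 : ℕ) : ℝ) + k) ^ r
          - ((j.choose t : ℕ) : ℝ) * (-1 : ℝ) ^ t * ((t : ℝ) + (k + 1)) ^ r := by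
    intro t _
    rw [Nat.choose_succ_succ]
    push_cast
    have : ((t : ℝ) + 1 + k) = (t : ℝ) + (k + 1) := by ring
    rw [this]
    ring
  rw [Finset.sum_congr rfl key, Finset.sum_sub_distrib]
  rw [Finset.sum_range_succ
      (fun t => ((j.choose (t + 1) : ℕ) : ℝ) * (-1 : ℝ) ^ (t + 1) * (((t + 1 : ℕ) : ℝ) + k) ^ r) j]
  simp [Nat.choose_succ_self]
  ring

lemma b'_expand (j : ℕ) (k : ℝ) (r : ℕ) :
    b' j k r = ∑ m ∈ Finset.range (r + 1), (r.choose m : ℝ) * k ^ (r - m) * b' j 0 m := by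
  unfold b'
  have h1 : ∀ t ∈ Finset.range (j + 1),
      (j.choose t : ℝ) * (-1 : ℝ) ^ t * ((t : ℝ) + k) ^ r
        = ∑ m ∈ Finset.range (r + 1),
            (r.choose m : ℝ) * k ^ (r - m) * ((j.choose t : ℝ) * (-1 : ℝ) ^ t * ((t : ℝ) + 0) ^ m) := by
    intro t _
    rw [add_pow]
    rw [Finset.mul_sum]
    refine Finset.sum_congr rfl fun m _ => ?_
    ring
  rw [Finset.sum_congr rfl h1, Finset.sum_comm]
  refine Finset.sum_congr rfl fun m _ => ?_
  rw [Finset.mul_sum]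

lemma b'_lt_eq_zero : ∀ j r, r < j → ∀ k, b' j k r = 0 := by
  intro j
  induction j with
  | zero => intro r hr; omega
  | succ j ih =>
    intro r hr k
    rw [b'_rec]
    rcases Nat.lt_or_ge r j with h | h
    · rw [ih r h k, ih r h (k + 1), sub_zero]
    · have hrj : r = j := by omega
      subst hrj
      have hconst : ∀ k' : ℝ, b' r k' r = b' r 0 r := by
        intro k'
        rw [b'_expand]
        rw [Finset.sum_eq_single r]
        · simp
        · intro m hm hmj
          rw [Finset.mem_range] at hm
          rw [ih m (by omega) 0]
          ring
        · intro h; exact absurd (Finset.self_mem_range_succ r) h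
      rw [hconst k, hconst (k + 1), sub_self]

lemma c_eval (i : ℕ) (k x : ℝ) :
    ∑ r ∈ Finset.range (i + 1), c i r k * x ^ r = (descPochhammer ℝ i).eval (x - k) := by
  unfold c s
  simp_rw [Finset.sum_mul]
  rw [show x - k = x + (-k) by ring]
  rw [Polynomial.eval_eq_sum_range' (n := i + 1)
    (by rw [descPochhammer_natDegree]; omega)]
  simp_rw [← Finset.Ico_add_one_right_eq_Icc, Finset.range_eq_Ico]
  rw [Finset.sum_Ico_Ico_comm]
  refine Finset.sum_congr rfl fun m hm => ?_
  rw [add_pow, Finset.mul_sum]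
  rw [Finset.Ico_add_one_right_eq_Icc] at *
  rw [show Finset.Icc 0 m = Finset.range (m + 1) by
    rw [Finset.range_eq_Ico, Finset.Ico_add_one_right_eq_Icc]]
  refine Finset.sum_congr rfl fun r _ => ?_
  ring

/-- Orthogonality of MSN1 and MSN2 numbers:
`sum_{r=j}^{i} c(i,r,k)*b(r,j,k) = j! * δ_{i,j}`. -/
theorem msn1_msn2_orthogonal (i j : ℕ) (k : ℝ) :
    ∑ r ∈ Finset.Icc j i, c i r k * b r j k =
      (Nat.factorial j : ℝ) * (if i = j then 1 else 0) := by
  rcases Nat.lt_or_ge i j with hij | hij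
  · rw [Finset.Icc_eq_empty (by omega), Finset.sum_empty, if_neg (by omega)]
    ring
  · have hsub : Finset.Icc j i ⊆ Finset.range (i + 1) := by
      intro r hr; rw [Finset.mem_Icc] at hr; rw [Finset.mem_range]; omega
    have hvanish : ∀ r ∈ Finset.range (i + 1), r ∉ Finset.Icc j i →
        c i r k * b r j k = 0 := by
      intro r hr hnot
      rw [Finset.mem_range] at hr; rw [Finset.mem_Icc] at hnot
      have hrj : r < j := by omega
      rw [b_eq_b', b'_lt_eq_zero j r hrj k]
      ring
    rw [Finset.sum_subset hsub hvanish]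
    simp only [b, Finset.mul_sum]
    rw [Finset.sum_comm]
    have hinner : ∀ t ∈ Finset.range (j + 1),
        (∑ r ∈ Finset.range (i + 1),
          c i r k * ((j.choose t : ℝ) * (-1 : ℝ) ^ (j - t) * ((t : ℝ) + k) ^ r))
          = (j.choose t : ℝ) * (-1 : ℝ) ^ (j - t) * ((t.descFactorial i : ℕ) : ℝ) := by
      intro t _
      have h1 : (∑ r ∈ Finset.range (i + 1),
          c i r k * ((j.choose t : ℝ) * (-1 : ℝ) ^ (j - t) * ((t : ℝ) + k) ^ r))
          = (j.choose t : ℝ) * (-1 : ℝ) ^ (j - t)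
            * ∑ r ∈ Finset.range (i + 1), c i r k * ((t : ℝ) + k) ^ r := by
        rw [Finset.mul_sum]; exact Finset.sum_congr rfl fun r _ => by ring
      rw [h1, c_eval, show (t : ℝ) + k - k = ((t : ℕ) : ℝ) by ring,
        descPochhammer_eval_eq_descFactorial]
    rw [Finset.sum_congr rfl hinner]
    by_cases hij2 : i = j
    · subst hij2
      rw [if_pos rfl, mul_one]
      rw [Finset.sum_eq_single i]
      · simp [Nat.descFactorial_self, Nat.factorial]
      · intro t ht htne
        rw [Finset.mem_range] at ht
        rw [Nat.descFactorial_eq_zero_iff_lt.mpr (by omega)]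
        simp
      · intro h; exact absurd (Finset.self_mem_range_succ i) h
    · rw [if_neg hij2, mul_zero]
      refine Finset.sum_eq_zero fun t ht => ?_
      rw [Finset.mem_range] at ht
      rw [Nat.descFactorial_eq_zero_iff_lt.mpr (by omega)]
      simp
end
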